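/- For all ξ, η ∈ 𝓘 one has a(ξ, η) ∈ 𝓕. Moreover, for all natural numbers d, e and all x ∈ Q, deg a(t^d·ε, x·t^e·ε) ≤ d + e + 1; and if deg a(t^d·ε, x·t^e·ε) < d + e + 1, then x ∈ K. -/

import Mathlib

open scoped TensorProduct

/-- `f` is a Laurent polynomial: a finite sum `Σ y_z · t^z` with `y_z ∈ K`. -/
def IsLaurent {K : Type} [Field K] (f : RatFunc K) : Prop :=
  ∃ c : ℤ →₀ K, f = c.sum fun z y => algebraMap K (RatFunc K) y * RatFunc.X ^ z

/-- `f` is a Laurent polynomial of degree at most `n` (degree = max |z| over nonzero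
coefficients; `deg 0 = -∞`). -/
def LaurentDegLE {K : Type} [Field K] (f : RatFunc K) (n : ℕ) : Prop :=
  ∃ c : ℤ →₀ K, (∀ z : ℤ, c z ≠ 0 → |z| ≤ (n : ℤ)) ∧
    f = c.sum fun z y => algebraMap K (RatFunc K) y * RatFunc.X ^ z

/-- The value `a(f·ε, g·ε) = u·(σ(f)·g − f·σ(g))` of the alternating form `a` on `I`,
expressed through the unique representations `f·ε`, `g·ε` of its arguments. -/
noncomputable def aForm {K : Type} [Field K] (σ : RatFunc K ≃+* RatFunc K) (u : K)
    (f g : RatFunc K) : RatFunc K :=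
  algebraMap K (RatFunc K) u * (σ f * g - f * σ g)


/-!
Laurent polynomials form a `K`-subalgebra of `K(t)` that is stable under `σ`, and `σ` is an
involution because `σ ∘ σ` fixes `K` and `t`; since `ι u = -u`, the form `a` is `σ`-invariant.

For `x = x₀ + x₁ j`, comparing the `K(t)`-components of `x t^e ε = g ε` gives
`g = x₀ t^e + x₁ b^(e+1) t^(-(e+1))`, and `a(t^d ε, g ε)` is then a sum of four monomials with
exponents `e - d`, `d - e`, `-(d+e+1)` and `d+e+1`. The last one has coefficient `-u ι(x₁)`, read
off in the Laurent series expansion at `t = 0`; it vanishes only when `x₁ = 0`, i.e. `x ∈ K`.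
-/

open scoped LaurentSeries RatFunc

section LaurentPolynomials

variable {K : Type} [Field K]

noncomputable def laurentMonomial (y : K) (z : ℤ) : RatFunc K :=
  algebraMap K (RatFunc K) y * RatFunc.X ^ z

theorem laurentMonomial_mul (y y' : K) (z z' : ℤ) :
    laurentMonomial y z * laurentMonomial y' z' = laurentMonomial (y * y') (z + z') := by
  simp only [laurentMonomial, map_mul, zpow_add₀ (RatFunc.X_ne_zero (K := K))]
  ring

theorem laurentDegLE_laurentMonomial {n : ℕ} (y : K) {z : ℤ} (hz : |z| ≤ n) :
    LaurentDegLE (laurentMonomial y z) n := by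
  classical
  refine ⟨Finsupp.single z y, fun w hw => ?_, by simp [laurentMonomial]⟩
  obtain ⟨rfl, -⟩ := Finsupp.single_apply_ne_zero.1 hw
  exact hz

theorem LaurentDegLE.add {f g : RatFunc K} {n : ℕ} (hf : LaurentDegLE f n) (hg : LaurentDegLE g n) :
    LaurentDegLE (f + g) n := by
  obtain ⟨c, hc, rfl⟩ := hf
  obtain ⟨c', hc', rfl⟩ := hg
  refine ⟨c + c', fun z hz => ?_, (Finsupp.sum_add_index' (by simp) (by simp [add_mul])).symm⟩
  by_cases h : c z = 0
  · exact hc' z (by simpa [h] using hz)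
  · exact hc z h

theorem LaurentDegLE.neg {f : RatFunc K} {n : ℕ} (hf : LaurentDegLE f n) :
    LaurentDegLE (-f) n := by
  obtain ⟨c, hc, rfl⟩ := hf
  exact ⟨-c, fun z hz => hc z (by simpa using hz), by simp [Finsupp.sum_neg_index]⟩

theorem LaurentDegLE.sub {f g : RatFunc K} {n : ℕ} (hf : LaurentDegLE f n) (hg : LaurentDegLE g n) :
    LaurentDegLE (f - g) n := by
  simpa only [sub_eq_add_neg] using hf.add hg.neg

noncomputable def laurentCoeff (z : ℤ) : RatFunc K →+ K :=
  (HahnSeries.coeff.addMonoidHom z).comp (algebraMap (RatFunc K) K⸨X⸩).toAddMonoidHom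

theorem laurentCoeff_laurentMonomial (w : ℤ) (y : K) (z : ℤ) :
    laurentCoeff w (laurentMonomial y z) = if w = z then y else 0 := by
  have hC : algebraMap (RatFunc K) K⸨X⸩ (algebraMap K (RatFunc K) y) = HahnSeries.C y := by
    rw [RatFunc.algebraMap_eq_C, ← RatFunc.algebraMap_C, ← IsScalarTower.algebraMap_apply]
    simp only [Polynomial.algebraMap_hahnSeries_apply, Polynomial.coe_C, HahnSeries.ofPowerSeries_C]
  have hX : algebraMap (RatFunc K) K⸨X⸩ (RatFunc.X ^ z) = HahnSeries.single z 1 := by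
    rw [map_zpow₀, RatFunc.coe_X]
    exact (RatFunc.single_zpow z).symm
  change (algebraMap (RatFunc K) K⸨X⸩ (laurentMonomial y z)).coeff w = _
  rw [laurentMonomial, map_mul, hC, hX, HahnSeries.C_apply, HahnSeries.single_mul_single, zero_add,
    mul_one]
  convert HahnSeries.coeff_single

theorem LaurentDegLE.laurentCoeff_eq_zero {f : RatFunc K} {n : ℕ} (hf : LaurentDegLE f n) {z : ℤ}
    (hz : n < |z|) : laurentCoeff z f = 0 := by
  classical
  obtain ⟨c, hc, rfl⟩ := hf
  have hcz : c z = 0 := by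
    by_contra h
    exact (hc z h).not_gt hz
  change laurentCoeff z (c.sum fun w y => laurentMonomial y w) = 0
  simp only [map_finsuppSum, laurentCoeff_laurentMonomial, Finsupp.sum_ite_eq, hcz, ite_self]

end LaurentPolynomials

section SemilinearInvolution

variable {K : Type} [Field K] {σ : RatFunc K ≃+* RatFunc K} {ι : K →+* K} {β : K}

theorem map_laurentMonomial
    (hσK : ∀ x : K, σ (algebraMap K (RatFunc K) x) = algebraMap K (RatFunc K) (ι x))
    (hσX : σ RatFunc.X = algebraMap K (RatFunc K) β * RatFunc.X⁻¹) (y : K) (z : ℤ) :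
    σ (laurentMonomial y z) = laurentMonomial (ι y * β ^ z) (-z) := by
  rw [laurentMonomial, map_mul, hσK, map_zpow₀, hσX, mul_zpow, laurentMonomial, map_mul, map_zpow₀,
    inv_zpow', mul_assoc]

theorem involutive_of_map_X
    (hσK : ∀ x : K, σ (algebraMap K (RatFunc K) x) = algebraMap K (RatFunc K) (ι x))
    (hσX : σ RatFunc.X = algebraMap K (RatFunc K) β * RatFunc.X⁻¹)
    (hι : ∀ x : K, ι (ι x) = x) (hιβ : ι β = β) (hβ : β ≠ 0) : Function.Involutive σ := by
  suffices h : (σ : RatFunc K →+* RatFunc K).comp σ = RingHom.id _ from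
    fun f => RingHom.congr_fun h f
  refine IsLocalization.ringHom_ext (nonZeroDivisors (Polynomial K)) (Polynomial.ringHom_ext ?_ ?_)
  · intro a
    simp [RatFunc.algebraMap_C, ← RatFunc.algebraMap_eq_C, hσK, hι]
  · have hβ' : algebraMap K (RatFunc K) β ≠ 0 := (map_ne_zero _).2 hβ
    change σ (σ (algebraMap _ _ Polynomial.X)) = algebraMap _ _ Polynomial.X
    rw [RatFunc.algebraMap_X, hσX, map_mul, map_inv₀, hσK, hσX, hιβ, mul_inv, inv_inv, ← mul_assoc,
      mul_inv_cancel₀ hβ', one_mul]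

end SemilinearInvolution

section LaurentSubalgebra

variable (K : Type) [Field K]

noncomputable def laurentSubalgebra : Subalgebra K (RatFunc K) :=
  (Submodule.span K (Set.range fun z : ℤ => (RatFunc.X : RatFunc K) ^ z)).toSubalgebra
    (Submodule.subset_span ⟨0, zpow_zero _⟩) fun f g hf hg => by
      have hfg := Submodule.mul_mem_mul hf hg
      rw [Submodule.span_mul_span] at hfg
      refine Submodule.span_mono ?_ hfg
      rintro _ ⟨_, ⟨a, rfl⟩, _, ⟨b, rfl⟩, rfl⟩
      exact ⟨a + b, zpow_add₀ RatFunc.X_ne_zero a b⟩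

variable {K}

theorem isLaurent_iff_mem_laurentSubalgebra (f : RatFunc K) :
    IsLaurent f ↔ f ∈ laurentSubalgebra K := by
  rw [laurentSubalgebra, Submodule.mem_toSubalgebra, Finsupp.mem_span_range_iff_exists_finsupp]
  simp only [IsLaurent, Algebra.smul_def, eq_comm]

theorem map_mem_laurentSubalgebra {σ : RatFunc K ≃+* RatFunc K} {ι : K →+* K} {β : K}
    (hσK : ∀ x : K, σ (algebraMap K (RatFunc K) x) = algebraMap K (RatFunc K) (ι x))
    (hσX : σ RatFunc.X = algebraMap K (RatFunc K) β * RatFunc.X⁻¹) {f : RatFunc K}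
    (hf : f ∈ laurentSubalgebra K) : σ f ∈ laurentSubalgebra K := by
  rw [laurentSubalgebra, Submodule.mem_toSubalgebra] at hf ⊢
  induction hf using Submodule.span_induction with
  | mem _ h =>
    obtain ⟨z, rfl⟩ := h
    have h := map_laurentMonomial hσK hσX 1 z
    rw [laurentMonomial, map_one, one_mul, laurentMonomial, ← Algebra.smul_def] at h
    exact h ▸ Submodule.smul_mem _ _ (Submodule.subset_span ⟨-z, rfl⟩)
  | zero => simp
  | add _ _ _ _ hf hg => simpa using add_mem hf hg
  | smul a _ _ hf =>
    rw [Algebra.smul_def, map_mul, hσK, ← Algebra.smul_def]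
    exact Submodule.smul_mem _ _ hf

end LaurentSubalgebra

section AlternatingForm

variable {K : Type} [Field K] {σ : RatFunc K ≃+* RatFunc K} {ι : K →+* K} {β : K}

theorem aForm_mem_laurentSubalgebra
    (hσK : ∀ x : K, σ (algebraMap K (RatFunc K) x) = algebraMap K (RatFunc K) (ι x))
    (hσX : σ RatFunc.X = algebraMap K (RatFunc K) β * RatFunc.X⁻¹) (u : K) {f g : RatFunc K}
    (hf : f ∈ laurentSubalgebra K) (hg : g ∈ laurentSubalgebra K) :
    aForm σ u f g ∈ laurentSubalgebra K :=
  mul_mem (Subalgebra.algebraMap_mem _ u) <| sub_mem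
    (mul_mem (map_mem_laurentSubalgebra hσK hσX hf) hg)
    (mul_mem hf (map_mem_laurentSubalgebra hσK hσX hg))

theorem map_aForm
    (hσK : ∀ x : K, σ (algebraMap K (RatFunc K) x) = algebraMap K (RatFunc K) (ι x))
    (hσ : Function.Involutive σ) {u : K} (hu : ι u = -u) (f g : RatFunc K) :
    σ (aForm σ u f g) = aForm σ u f g := by
  rw [aForm, map_mul, map_sub, map_mul, map_mul, hσ f, hσ g, hσK, hu, map_neg]
  ring

theorem aForm_add_right (u : K) (f g₁ g₂ : RatFunc K) :
    aForm σ u f (g₁ + g₂) = aForm σ u f g₁ + aForm σ u f g₂ := by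
  simp only [aForm, map_add]
  ring

theorem aForm_laurentMonomial
    (hσK : ∀ x : K, σ (algebraMap K (RatFunc K) x) = algebraMap K (RatFunc K) (ι x))
    (hσX : σ RatFunc.X = algebraMap K (RatFunc K) β * RatFunc.X⁻¹) (u y w : K) (zy zw : ℤ) :
    aForm σ u (laurentMonomial y zy) (laurentMonomial w zw)
      = laurentMonomial (u * (ι y * β ^ zy * w)) (zw - zy)
        - laurentMonomial (u * (y * (ι w * β ^ zw))) (zy - zw) := by
  have hu : algebraMap K (RatFunc K) u = laurentMonomial u 0 := by simp [laurentMonomial]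
  rw [aForm, map_laurentMonomial hσK hσX, map_laurentMonomial hσK hσX, laurentMonomial_mul,
    laurentMonomial_mul, hu, mul_sub, laurentMonomial_mul, laurentMonomial_mul, zero_add, zero_add,
    neg_add_eq_sub, ← sub_eq_add_neg]

theorem aForm_X_pow_eq
    (hσK : ∀ x : K, σ (algebraMap K (RatFunc K) x) = algebraMap K (RatFunc K) (ι x))
    (hσX : σ RatFunc.X = algebraMap K (RatFunc K) β * RatFunc.X⁻¹) (u x y : K) (d e : ℕ) :
    aForm σ u (RatFunc.X ^ d) (laurentMonomial x e + laurentMonomial y (-(e + 1)))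
      = (laurentMonomial (u * (β ^ d * x)) (e - d) - laurentMonomial (u * (ι x * β ^ e)) (d - e))
        + (laurentMonomial (u * (β ^ d * y)) (-(e + 1) - d)
          - laurentMonomial (u * (ι y * β ^ (-(e + 1 : ℤ)))) (d + e + 1)) := by
  have hXd : (RatFunc.X : RatFunc K) ^ d = laurentMonomial 1 d := by simp [laurentMonomial]
  rw [hXd, aForm_add_right, aForm_laurentMonomial hσK hσX, aForm_laurentMonomial hσK hσX]
  simp only [map_one, one_mul, zpow_natCast]
  rw [sub_neg_eq_add, ← add_assoc]

theorem laurentDegLE_aForm_X_pow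
    (hσK : ∀ x : K, σ (algebraMap K (RatFunc K) x) = algebraMap K (RatFunc K) (ι x))
    (hσX : σ RatFunc.X = algebraMap K (RatFunc K) β * RatFunc.X⁻¹) (u x y : K) (d e : ℕ) :
    LaurentDegLE (aForm σ u (RatFunc.X ^ d) (laurentMonomial x e + laurentMonomial y (-(e + 1))))
      (d + e + 1) := by
  rw [aForm_X_pow_eq hσK hσX]
  refine .add (.sub ?_ ?_) (.sub ?_ ?_) <;> refine laurentDegLE_laurentMonomial _ ?_ <;>
    rw [abs_le] <;> constructor <;> push_cast <;> omega

theorem eq_zero_of_laurentDegLE_aForm_X_pow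
    (hσK : ∀ x : K, σ (algebraMap K (RatFunc K) x) = algebraMap K (RatFunc K) (ι x))
    (hσX : σ RatFunc.X = algebraMap K (RatFunc K) β * RatFunc.X⁻¹) {u : K} (hu : u ≠ 0)
    (hβ : β ≠ 0) (x y : K) (d e : ℕ)
    (h : LaurentDegLE
      (aForm σ u (RatFunc.X ^ d) (laurentMonomial x e + laurentMonomial y (-(e + 1)))) (d + e)) :
    y = 0 := by
  have htop := h.laurentCoeff_eq_zero (z := d + e + 1) (by rw [abs_of_nonneg (by omega)]; omega)
  rw [aForm_X_pow_eq hσK hσX] at htop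
  simp only [map_add, map_sub, laurentCoeff_laurentMonomial] at htop
  rw [if_neg (by omega), if_neg (by omega), if_neg (by omega)] at htop
  simp only [sub_self, zero_add, zero_sub, neg_eq_zero, if_true, mul_eq_zero, hu, false_or,
    map_eq_zero] at htop
  exact htop.resolve_right (zpow_ne_zero _ hβ)

end AlternatingForm

section CrossedProduct

variable {K : Type} [Field K] {σ : RatFunc K ≃+* RatFunc K} {QF : Type} [Ring QF]
  {ψ : RatFunc K →+* QF} {J : QF}

theorem mul_one_add_J_mul (hJf : ∀ f : RatFunc K, J * ψ f = ψ (σ f) * J) {β : RatFunc K}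
    (hJ2 : J * J = ψ β) (a₁ a₂ s : RatFunc K) :
    (ψ a₁ + ψ a₂ * J) * (1 + J * ψ s) = ψ (a₁ + a₂ * β * s) + ψ (a₂ + a₁ * σ s) * J := by
  have hJJ : ψ a₂ * J * (J * ψ s) = ψ (a₂ * β * s) := by
    rw [← mul_assoc, mul_assoc _ J J, hJ2, ← map_mul, ← map_mul]
  have hJs : ψ a₁ * (J * ψ s) = ψ (a₁ * σ s) * J := by rw [hJf, ← mul_assoc, ← map_mul]
  rw [mul_add, mul_one, add_mul, hJJ, hJs, map_add, map_add, add_mul]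
  abel

theorem fst_eq_of_mul_one_add_J_mul_eq (hJf : ∀ f : RatFunc K, J * ψ f = ψ (σ f) * J)
    {β : RatFunc K} (hJ2 : J * J = ψ β)
    (hdec : ∀ q : QF, ∃! p : RatFunc K × RatFunc K, q = ψ p.1 + ψ p.2 * J)
    {a₁ a₂ c s g : RatFunc K}
    (h : (ψ a₁ + ψ a₂ * J) * (ψ c * (1 + J * ψ s)) = ψ g * (1 + J * ψ s)) :
    g = a₁ * c + a₂ * σ c * β * s := by
  have hc : (ψ a₁ + ψ a₂ * J) * ψ c = ψ (a₁ * c) + ψ (a₂ * σ c) * J := by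
    rw [add_mul, mul_assoc, hJf, ← mul_assoc, ← map_mul, ← map_mul]
  have hg : ψ g = ψ g + ψ 0 * J := by rw [map_zero, zero_mul, add_zero]
  rw [← mul_assoc, hc, hg, mul_one_add_J_mul hJf hJ2, mul_one_add_J_mul hJf hJ2] at h
  obtain ⟨p, -, hp⟩ := hdec (ψ (g + 0 * β * s) + ψ (0 + g * σ s) * J)
  have := congrArg Prod.fst ((hp (_, _) h.symm).trans (hp (_, _) rfl).symm)
  simpa using this.symm

end CrossedProduct

theorem degree_bound_for_a_general
    -- k is a field, K/k a degree-2 Galois extension with nontrivial automorphism ι,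
    -- b a nonzero element of k
    (k K : Type) [Field k] [Field K] [Algebra k K]
    (ι : K ≃ₐ[k] K)
    (hι2 : ∀ x : K, ι (ι x) = x)
    (b : k) (hb : b ≠ 0)
    -- Q = (K, ι, b) is the crossed-product quaternion k-algebra, a division ring,
    -- containing K via φ, with j·j = b, j·x = ι(x)·j, and Q = K ⊕ K·j
    (Q : Type) [DivisionRing Q] [Algebra k Q]
    (φ : K →ₐ[k] Q) (j : Q)
    (hQdec : ∀ q : Q, ∃! p : K × K, q = φ p.1 + φ p.2 * j)
    -- σ is the automorphism of K(t) acting as ι on K with σ(t) = b·t⁻¹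
    (σ : RatFunc K ≃+* RatFunc K)
    (hσK : ∀ x : K, σ (algebraMap K (RatFunc K) x) = algebraMap K (RatFunc K) (ι x))
    (hσt : σ RatFunc.X = algebraMap K (RatFunc K) (algebraMap k K b) * RatFunc.X⁻¹)
    -- Q_F = Q ⊗_k F, identified with K(t) ⊕ K(t)·j : it contains K(t) via ψ and an
    -- element J (the image of j) with J·J = b, J·ψ(f) = ψ(σ f)·J, Q_F = ψ(K(t)) ⊕ ψ(K(t))·J,
    -- and Q embeds via φ' compatibly with φ and j
    (QF : Type) [Ring QF]
    (ψ : RatFunc K →+* QF) (J : QF)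
    (hJ2 : J * J = ψ (algebraMap K (RatFunc K) (algebraMap k K b)))
    (hJf : ∀ f : RatFunc K, J * ψ f = ψ (σ f) * J)
    (hQFdec : ∀ q : QF, ∃! p : RatFunc K × RatFunc K, q = ψ p.1 + ψ p.2 * J)
    (φ' : Q →+* QF)
    (hφ'K : ∀ x : K, φ' (φ x) = ψ (algebraMap K (RatFunc K) x))
    (hφ'j : φ' j = J)
    -- u is a nonzero element of K with ι(u) = -u
    (u : K) (hu : u ≠ 0) (hιu : ι u = -u)
    -- ε = 1 + j·t⁻¹
    (ε : QF) (hε : ε = 1 + J * ψ RatFunc.X⁻¹) :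
    -- a(ξ, η) ∈ 𝓕 for ξ = f·ε, η = g·ε ∈ 𝓘
    (∀ f g : RatFunc K, IsLaurent f → IsLaurent g →
      IsLaurent (aForm σ u f g) ∧ σ (aForm σ u f g) = aForm σ u f g) ∧
    -- deg a(t^d·ε, x·t^e·ε) ≤ d+e+1, with x·t^e·ε = g·ε;
    -- and if deg a(t^d·ε, x·t^e·ε) < d+e+1 then x ∈ K
    (∀ (d e : ℕ) (x : Q) (g : RatFunc K),
      φ' x * (ψ (RatFunc.X ^ e) * ε) = ψ g * ε →
      LaurentDegLE (aForm σ u (RatFunc.X ^ d) g) (d + e + 1) ∧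
      (LaurentDegLE (aForm σ u (RatFunc.X ^ d) g) (d + e) → ∃ y : K, x = φ y)) := by
  set β := algebraMap k K b
  have hβ : β ≠ 0 := (map_ne_zero _).2 hb
  have hσ : Function.Involutive σ := involutive_of_map_X (ι := ι) hσK hσt hι2 (ι.commutes b) hβ
  refine ⟨fun f g hf hg => ⟨?_, map_aForm (ι := ι) hσK hσ hιu f g⟩, fun d e x g hxg => ?_⟩
  · rw [isLaurent_iff_mem_laurentSubalgebra] at hf hg ⊢
    exact aForm_mem_laurentSubalgebra (ι := ι) hσK hσt u hf hg
  obtain ⟨⟨x₀, x₁⟩, rfl, -⟩ := hQdec x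
  have hx : φ' (φ x₀ + φ x₁ * j) = ψ (algebraMap K _ x₀) + ψ (algebraMap K _ x₁) * J := by
    rw [map_add, map_mul, hφ'K, hφ'K, hφ'j]
  rw [hx, hε] at hxg
  have hg : g = laurentMonomial x₀ e + laurentMonomial (x₁ * β ^ (e + 1)) (-(e + 1)) := by
    rw [fst_eq_of_mul_one_add_J_mul_eq hJf hJ2 hQFdec hxg, map_pow, hσt]
    simp only [laurentMonomial, map_mul, map_pow, mul_pow, zpow_neg,
      zpow_add_one₀ (RatFunc.X_ne_zero (K := K)), zpow_natCast, mul_inv, inv_pow]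
    ring
  subst hg
  refine ⟨laurentDegLE_aForm_X_pow (ι := ι) hσK hσt u _ _ d e, fun hdeg => ⟨x₀, ?_⟩⟩
  have hx₁ := eq_zero_of_laurentDegLE_aForm_X_pow (ι := ι) hσK hσt hu hβ _ _ d e hdeg
  rw [(mul_eq_zero.1 hx₁).resolve_right (pow_ne_zero _ hβ), map_zero, zero_mul, add_zero]

theorem degree_bound_for_a
    -- k is a field, K/k a degree-2 Galois extension with nontrivial automorphism ι,
    -- b a nonzero element of k
    (k K : Type) [Field k] [Field K] [Algebra k K]
    (hrank : Module.finrank k K = 2)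
    (ι : K ≃ₐ[k] K) (hι : ∃ x : K, ι x ≠ x)
    (hι2 : ∀ x : K, ι (ι x) = x)
    (hfix : ∀ x : K, ι x = x → ∃ c : k, algebraMap k K c = x)
    (b : k) (hb : b ≠ 0)
    -- Q = (K, ι, b) is the crossed-product quaternion k-algebra, a division ring,
    -- containing K via φ, with j·j = b, j·x = ι(x)·j, and Q = K ⊕ K·j
    (Q : Type) [DivisionRing Q] [Algebra k Q]
    (φ : K →ₐ[k] Q) (j : Q)
    (hj2 : j * j = algebraMap k Q b)
    (hjx : ∀ x : K, j * φ x = φ (ι x) * j)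
    (hQdec : ∀ q : Q, ∃! p : K × K, q = φ p.1 + φ p.2 * j)
    -- σ is the automorphism of K(t) acting as ι on K with σ(t) = b·t⁻¹
    (σ : RatFunc K ≃+* RatFunc K)
    (hσK : ∀ x : K, σ (algebraMap K (RatFunc K) x) = algebraMap K (RatFunc K) (ι x))
    (hσt : σ RatFunc.X = algebraMap K (RatFunc K) (algebraMap k K b) * RatFunc.X⁻¹)
    -- Q_F = Q ⊗_k F, identified with K(t) ⊕ K(t)·j : it contains K(t) via ψ and an
    -- element J (the image of j) with J·J = b, J·ψ(f) = ψ(σ f)·J, Q_F = ψ(K(t)) ⊕ ψ(K(t))·J,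
    -- and Q embeds via φ' compatibly with φ and j
    (QF : Type) [Ring QF]
    (ψ : RatFunc K →+* QF) (J : QF)
    (hJ2 : J * J = ψ (algebraMap K (RatFunc K) (algebraMap k K b)))
    (hJf : ∀ f : RatFunc K, J * ψ f = ψ (σ f) * J)
    (hQFdec : ∀ q : QF, ∃! p : RatFunc K × RatFunc K, q = ψ p.1 + ψ p.2 * J)
    (φ' : Q →+* QF)
    (hφ'K : ∀ x : K, φ' (φ x) = ψ (algebraMap K (RatFunc K) x))
    (hφ'j : φ' j = J)
    -- u is a nonzero element of K with ι(u) = -u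
    (u : K) (hu : u ≠ 0) (hιu : ι u = -u)
    -- ε = 1 + j·t⁻¹
    (ε : QF) (hε : ε = 1 + J * ψ RatFunc.X⁻¹) :
    -- a(ξ, η) ∈ 𝓕 for ξ = f·ε, η = g·ε ∈ 𝓘
    (∀ f g : RatFunc K, IsLaurent f → IsLaurent g →
      IsLaurent (aForm σ u f g) ∧ σ (aForm σ u f g) = aForm σ u f g) ∧
    -- deg a(t^d·ε, x·t^e·ε) ≤ d+e+1, with x·t^e·ε = g·ε;
    -- and if deg a(t^d·ε, x·t^e·ε) < d+e+1 then x ∈ K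
    (∀ (d e : ℕ) (x : Q) (g : RatFunc K),
      φ' x * (ψ (RatFunc.X ^ e) * ε) = ψ g * ε →
      LaurentDegLE (aForm σ u (RatFunc.X ^ d) g) (d + e + 1) ∧
      (LaurentDegLE (aForm σ u (RatFunc.X ^ d) g) (d + e) → ∃ y : K, x = φ y)) :=
  degree_bound_for_a_general k K ι hι2 b hb Q φ j hQdec σ hσK hσt QF ψ J hJ2 hJf hQFdec φ' hφ'K hφ'j
    u hu hιu ε hε
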